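/- Let p be an odd prime, s a positive integer, and s1, s2 divisors of s with s2 | s1. The number of pairs (a,b) ∈ F_{p^s}^2 with (a,b) ≠ (0,0) and Tr_{F_{p^s}/F_{p^{s2}}}(a^2+b^2) = 0 equals p^{2s-s2} + p^{-s2}(p^{s2}-1)G^2 - 1, where G^2 = (-1)^{((p-1)/2)s} p^s. -/

import Mathlib

/-! Write `q = #K` and `χ` for the quadratic character of `K`. Counting square roots with `χ`,
the number of solutions of `a² + b² = x` is `q + ∑ y, χ y * χ (x - y)`. For `x ≠ 0` the
substitution `y ↦ x y` turns the sum into the Jacobi sum `J(χ, χ) = -χ(-1)`; for `x = 0` it is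
`χ(-1) (q - 1)`. The trace `K → F₂` is surjective, so its kernel has `q / p ^ s₂` elements, and
summing the counts over the kernel, with `χ(-1) = χ₄(q) = (-1) ^ ((p - 1) / 2 * s)`, gives the
formula. -/

open Finset

section SumOfTwoSquares

variable {K : Type*} [Field K] [Fintype K] [DecidableEq K]

lemma card_sq_eq (hK : ringChar K ≠ 2) (y : K) :
    (#{b : K | b ^ 2 = y} : ℤ) = quadraticChar K y + 1 := by
  simpa only [Set.toFinset_ofPred] using quadraticChar_card_sqrts hK y

lemma sum_comp_sq (hK : ringChar K ≠ 2) (f : K → ℤ) :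
    ∑ b : K, f (b ^ 2) = ∑ y : K, (quadraticChar K y + 1) * f y := by
  rw [← sum_fiberwise univ (· ^ 2) (fun b => f (b ^ 2))]
  refine sum_congr rfl fun y _ => ?_
  rw [sum_congr rfl fun b hb => by rw [(mem_filter.mp hb).2], sum_const, nsmul_eq_mul,
    card_sq_eq hK]

lemma card_sq_add_sq_eq (hK : ringChar K ≠ 2) (x : K) :
    (#{ab : K × K | ab.1 ^ 2 + ab.2 ^ 2 = x} : ℤ)
      = Fintype.card K + ∑ y : K, quadraticChar K y * quadraticChar K (x - y) := by
  have fiberwise :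
      #{ab : K × K | ab.1 ^ 2 + ab.2 ^ 2 = x} = ∑ b : K, #{a : K | a ^ 2 = x - b ^ 2} := by
    rw [card_filter, Fintype.sum_prod_type, sum_comm]
    simp only [card_filter, eq_sub_iff_add_eq]
  have shift : ∑ y : K, quadraticChar K (x - y) = 0 := by
    rw [← quadraticChar_sum_zero hK]
    exact Fintype.sum_equiv (Equiv.subLeft x) _ _ fun _ => rfl
  push_cast [fiberwise, card_sq_eq hK]
  rw [sum_add_distrib, sum_comp_sq hK (fun y => quadraticChar K (x - y))]
  simp only [add_mul, one_mul, sum_add_distrib, shift, sum_const, card_univ, nsmul_eq_mul, mul_one]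
  ring

lemma sum_quadraticChar_mul_sub (hK : ringChar K ≠ 2) {x : K} (hx : x ≠ 0) :
    ∑ y : K, quadraticChar K y * quadraticChar K (x - y) = -quadraticChar K (-1) := by
  have scale : ∑ y : K, quadraticChar K y * quadraticChar K (x - y)
      = jacobiSum (quadraticChar K) (quadraticChar K) := by
    refine (Fintype.sum_equiv (Equiv.mulLeft₀ x hx) _ _ fun t => ?_).symm
    simp only [Equiv.mulLeft₀_apply, show x - x * t = x * (1 - t) by ring, map_mul]
    linear_combination -(quadraticChar K t * quadraticChar K (1 - t)) * quadraticChar_sq_one hx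
  rw [scale]
  nth_rewrite 2 [← (quadraticChar_isQuadratic K).inv]
  exact jacobiSum_nontrivial_inv (quadraticChar_ne_one hK)

lemma sum_quadraticChar_mul_neg :
    ∑ y : K, quadraticChar K y * quadraticChar K (-y)
      = quadraticChar K (-1) * (Fintype.card K - 1) := by
  have hy : ∀ y : K, quadraticChar K y * quadraticChar K (-y)
      = quadraticChar K (-1) * (1 - if y = 0 then 1 else 0) := by
    intro y
    rcases eq_or_ne y 0 with rfl | hy
    · simp
    · rw [if_neg hy, neg_eq_neg_one_mul, map_mul, sub_zero, mul_one,
        mul_left_comm, ← sq, quadraticChar_sq_one hy, mul_one]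
  simp only [hy, ← mul_sum, sum_sub_distrib, sum_ite_eq', mem_univ, if_true, sum_const,
    card_univ, nsmul_eq_mul, mul_one]

lemma card_sq_add_sq_eq_of_ne_zero (hK : ringChar K ≠ 2) {x : K} (hx : x ≠ 0) :
    (#{ab : K × K | ab.1 ^ 2 + ab.2 ^ 2 = x} : ℤ) = Fintype.card K - quadraticChar K (-1) := by
  rw [card_sq_add_sq_eq hK, sum_quadraticChar_mul_sub hK hx, sub_eq_add_neg]

lemma card_sq_add_sq_eq_zero (hK : ringChar K ≠ 2) :
    (#{ab : K × K | ab.1 ^ 2 + ab.2 ^ 2 = 0} : ℤ)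
      = Fintype.card K + quadraticChar K (-1) * (Fintype.card K - 1) := by
  simp only [card_sq_add_sq_eq hK, zero_sub, sum_quadraticChar_mul_neg]

lemma card_sq_add_sq_mem (hK : ringChar K ≠ 2) (T : Finset K) (hT : 0 ∈ T) :
    (#{ab : K × K | ab.1 ^ 2 + ab.2 ^ 2 ∈ T} : ℤ)
      = Fintype.card K + quadraticChar K (-1) * (Fintype.card K - 1)
        + (#T - 1) * (Fintype.card K - quadraticChar K (-1)) := by
  rw [← sum_card_fiberwise_eq_card_filter, Nat.cast_sum, ← add_sum_erase T _ hT,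
    card_sq_add_sq_eq_zero hK,
    sum_congr rfl fun x hx => card_sq_add_sq_eq_of_ne_zero hK (ne_of_mem_erase hx),
    sum_const, card_erase_of_mem hT, nsmul_eq_mul, Nat.cast_pred (card_pos.mpr ⟨0, hT⟩)]

end SumOfTwoSquares

lemma AddMonoidHom.card_filter_eq_zero_mul_card {G H : Type*} [AddGroup G] [Fintype G]
    [AddGroup H] [Fintype H] [DecidableEq H] (f : G →+ H) (hf : Function.Surjective f) :
    #{g : G | f g = 0} * Fintype.card H = Fintype.card G := by
  calc #{g : G | f g = 0} * Fintype.card H = ∑ y : H, #{g : G | f g = y} := by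
        rw [sum_congr rfl fun y _ => card_fiber_eq_of_mem_range f (hf y) (hf 0), sum_const,
          card_univ, smul_eq_mul, mul_comm]
    _ = Fintype.card G := (card_eq_sum_card_fiberwise fun _ _ => mem_univ _).symm

lemma card_filter_trace_eq_zero_mul_card (F K : Type*) [Field F] [Field K] [Fintype F]
    [Fintype K] [DecidableEq F] [Algebra F K] :
    #{x : K | Algebra.trace F K x = 0} * Fintype.card F = Fintype.card K :=
  have : FiniteDimensional F K := Module.Finite.of_finite
  (Algebra.trace F K).toAddMonoidHom.card_filter_eq_zero_mul_card (Algebra.trace_surjective F K)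

lemma ringChar_ne_two_of_card_eq_pow {K : Type*} [Field K] [Fintype K] {p s : ℕ} (hp : Odd p)
    (hcard : Fintype.card K = p ^ s) : ringChar K ≠ 2 := by
  have := Nat.odd_iff.mp (hp.pow (n := s))
  rw [Ne, FiniteField.even_card_iff_char_two, hcard]
  omega

lemma quadraticChar_neg_one_of_card_eq_pow {K : Type*} [Field K] [Fintype K] [DecidableEq K]
    {p s : ℕ} (hp : Odd p) (hcard : Fintype.card K = p ^ s) :
    quadraticChar K (-1) = (-1) ^ ((p - 1) / 2 * s) := by
  have hp2 := Nat.odd_iff.mp hp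
  rw [quadraticChar_neg_one (ringChar_ne_two_of_card_eq_pow hp hcard), hcard, Nat.cast_pow,
    map_pow, ZMod.χ₄_eq_neg_one_pow hp2, ← pow_mul]
  congr 2
  omega

theorem stmt10_general (p s s2 : ℕ) (hodd : Odd p)
    (F2 K : Type) [Field F2] [Field K] [Fintype F2] [Fintype K]
    [DecidableEq F2] [DecidableEq K] [Algebra F2 K]
    (hcard2 : Fintype.card F2 = p ^ s2) (hcard : Fintype.card K = p ^ s) :
    ((Finset.univ.filter (fun ab : K × K =>
        ¬(ab.1 = 0 ∧ ab.2 = 0) ∧ Algebra.trace F2 K (ab.1 ^ 2 + ab.2 ^ 2) = 0)).card : ℤ)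
        * p ^ s2
      = p ^ (2 * s) + (p ^ s2 - 1) * ((-1) ^ (((p - 1) / 2) * s) * p ^ s)
          - p ^ s2 := by
  set T : Finset K := {x : K | Algebra.trace F2 K x = 0}
  have h0T : (0 : K) ∈ T := by simp [T]
  have hT : (#T : ℤ) * p ^ s2 = p ^ s := by
    exact_mod_cast hcard ▸ hcard2 ▸ card_filter_trace_eq_zero_mul_card F2 K
  have hpairs : univ.filter (fun ab : K × K =>
      ¬(ab.1 = 0 ∧ ab.2 = 0) ∧ Algebra.trace F2 K (ab.1 ^ 2 + ab.2 ^ 2) = 0)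
      = (univ.filter fun ab : K × K => ab.1 ^ 2 + ab.2 ^ 2 ∈ T).erase (0, 0) := by
    ext ab
    simp [T, Prod.ext_iff]
  rw [hpairs, cast_card_erase_of_mem (by simpa using h0T),
    card_sq_add_sq_mem (ringChar_ne_two_of_card_eq_pow hodd hcard) T h0T,
    quadraticChar_neg_one_of_card_eq_pow hodd hcard, hcard]
  push_cast
  linear_combination ((p : ℤ) ^ s - (-1) ^ ((p - 1) / 2 * s)) * hT

/-- the number of `(a,b) ∈ F_{p^s}²` with `(a,b) ≠ (0,0)` and
`Tr_{K/F2}(a²+b²) = 0` equals `p^{2s-s2} + p^{-s2}(p^{s2}-1)G² - 1`, where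
`G² = (-1)^(((p-1)/2)s) p^s`.  (Stated multiplied through by `p^{s2}`.) -/
theorem stmt10 (p s s1 s2 : ℕ) (hp : p.Prime) (hodd : Odd p) (hs : 0 < s)
    (hs2 : 0 < s2) (hdvd1 : s1 ∣ s) (hdvd2 : s2 ∣ s1)
    (F2 K : Type) [Field F2] [Field K] [Fintype F2] [Fintype K]
    [DecidableEq F2] [DecidableEq K] [Algebra F2 K]
    (hcard2 : Fintype.card F2 = p ^ s2) (hcard : Fintype.card K = p ^ s) :
    ((Finset.univ.filter (fun ab : K × K =>
        ¬(ab.1 = 0 ∧ ab.2 = 0) ∧ Algebra.trace F2 K (ab.1 ^ 2 + ab.2 ^ 2) = 0)).card : ℤ)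
        * p ^ s2
      = p ^ (2 * s) + (p ^ s2 - 1) * ((-1) ^ (((p - 1) / 2) * s) * p ^ s)
          - p ^ s2 :=
  stmt10_general p s s2 hodd F2 K hcard2 hcard
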